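/- arXiv:1103.3929 — 2 statements merged into one kernel-verified Lean document; each statement's English description precedes it below -/
import Mathlib

section
/- For nonnegative integers L₁ ≥ 2 and k₁ ≥ 1, the sum over m from 1 to k₁ of (m−1)·C(L₁+k₁−2−m, k₁−m) equals C(L₁+k₁−2, L₁). -/
lemma hockey_aux (a k : ℕ) :
    ∑ i ∈ Finset.range k, (a + i).choose a = (a + k).choose (a + 1) := by
  induction k with
  | zero => simp [Nat.choose_eq_zero_of_lt]
  | succ k ih =>
      rw [Finset.sum_range_succ, ih, ← Nat.add_assoc, Nat.choose_succ_succ',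
        Nat.add_comm]

lemma aux_sum (a k : ℕ) :
    ∑ i ∈ Finset.range k, (k - 1 - i) * (a + i).choose i = (a + k).choose (a + 2) := by
  induction k with
  | zero => simp [Nat.choose_eq_zero_of_lt]
  | succ k ih =>
      rw [Finset.sum_range_succ]
      have h1 : ∀ i ∈ Finset.range k,
          (k + 1 - 1 - i) * (a + i).choose i
            = (k - 1 - i) * (a + i).choose i + (a + i).choose a := by
        intro i hi
        rw [Finset.mem_range] at hi
        have : (a + i).choose i = (a + i).choose a := by
          rw [Nat.choose_symm_add]
        rw [this]
        have : k + 1 - 1 - i = (k - 1 - i) + 1 := by omega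
        rw [this, Nat.add_mul, Nat.one_mul]
      rw [Finset.sum_congr rfl h1, Finset.sum_add_distrib, ih, hockey_aux]
      have h0 : k + 1 - 1 - k = 0 := by omega
      rw [h0, Nat.zero_mul, Nat.add_zero, ← Nat.add_assoc,
        Nat.choose_succ_succ' (a + k) (a + 1)]
      ring_nf

/-- For `L₁ ≥ 2`, `k₁ ≥ 1`:
`∑_{m=1}^{k₁} (m-1) C(L₁+k₁-2-m, k₁-m) = C(L₁+k₁-2, L₁)`. -/
theorem binomial_identity_specialized (L₁ k₁ : ℕ) (hL : 2 ≤ L₁) (hk : 1 ≤ k₁) :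
    ∑ m ∈ Finset.Icc 1 k₁, (m - 1) * (L₁ + k₁ - 2 - m).choose (k₁ - m) =
      (L₁ + k₁ - 2).choose L₁ := by
  obtain ⟨a, rfl⟩ := Nat.exists_eq_add_of_le hL
  have hLHS : ∑ m ∈ Finset.Icc 1 k₁, (m - 1) * (2 + a + k₁ - 2 - m).choose (k₁ - m)
      = ∑ i ∈ Finset.range k₁, i * (a + k₁ - 1 - i).choose (k₁ - 1 - i) := by
    have : Finset.Icc 1 k₁ = Finset.Ico 1 (k₁ + 1) := by
      rw [Finset.Ico_add_one_right_eq_Icc]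
    rw [this, Finset.sum_Ico_eq_sum_range]
    apply Finset.sum_congr (by congr 1)
    intro i hi
    rw [Finset.mem_range] at hi
    congr 1
    · omega
    · congr 1 <;> omega
  rw [hLHS, ← Finset.sum_range_reflect]
  have h2 : ∀ i ∈ Finset.range k₁,
      (k₁ - 1 - i) * (a + k₁ - 1 - (k₁ - 1 - i)).choose (k₁ - 1 - (k₁ - 1 - i))
        = (k₁ - 1 - i) * (a + i).choose i := by
    intro i hi
    rw [Finset.mem_range] at hi
    congr 2 <;> omega
  rw [Finset.sum_congr rfl h2, aux_sum]
  congr 1 <;> omega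
end

section
/- Let L₁ ≥ 1, k₁ ≥ 1. Define Φ₀(b; u₁,u₂) for b ∈ ℤ_{≥0} and (u₁,u₂) ∈ {0,1}² by: Φ₀(0; u) = 0; Φ₀(b; u) = b if b ≥ 1 and (u₁,u₂) ∈ {(0,1),(1,0)}; Φ₀(b; u) = b−1 if b ≥ 1 and (u₁,u₂) ∈ {(0,0),(1,1)}. Let B₁ be the set of tuples (b₁,…,b_{L₁}) of nonnegative integers summing to k₁, and suppose φ : {0,1}² → ℤ_{≥0} satisfies φ(0,1) = φ(1,0) = k̂ and φ(0,0) + φ(1,1) = L₁ − 2k̂ for some k̂ with 2k̂ ≤ L₁. Then Σ_{B∈B₁} Σ_{u∈{0,1}²} φ(u)·Φ₀(b₁; u) = L₁·C(L₁+k₁−2, L₁) + 2k̂·C(L₁+k₁−2, k₁−1). -/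
/-- The function `Φ₀(b; u₁,u₂)`: `0` if `b = 0`; `b` if `b ≥ 1` and `u₁ ≠ u₂`
(patterns `(0,1)`, `(1,0)`); `b - 1` if `b ≥ 1` and `u₁ = u₂`
(patterns `(0,0)`, `(1,1)`). -/
def Φ₀ (b : ℕ) (u : Bool × Bool) : ℕ :=
  if b = 0 then 0 else if u.1 ≠ u.2 then b else b - 1

/-- Stars and bars: the number of `L`-tuples of naturals summing to `k`. -/
lemma R2_card_antidiagTuple (L k : ℕ) :
    (Finset.Nat.antidiagonalTuple L k).card = (L + k - 1).choose k := by
  rw [← Finset.piAntidiag_univ_fin_eq_antidiagonalTuple k L,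
    ← Finset.map_sym_eq_piAntidiag, Finset.card_map, Finset.sym_univ, Finset.card_univ,
    Sym.card_sym_eq_choose, Fintype.card_fin]

/-- Shifting the distinguished coordinate down by one. -/
lemma R2_sum_shift (L k : ℕ) (i0 : Fin L) (g : ℕ → ℕ) (hg : g 0 = 0) :
    ∑ b ∈ Finset.Nat.antidiagonalTuple L (k + 1), g (b i0) =
      ∑ b ∈ Finset.Nat.antidiagonalTuple L k, g (b i0 + 1) := by
  classical
  rw [← Finset.sum_filter_of_ne (p := fun b : Fin L → ℕ => b i0 ≠ 0)
    (fun b _ h => by intro h0; rw [h0, hg] at h; exact h rfl)]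
  refine Finset.sum_nbij' (fun b => Function.update b i0 (b i0 - 1))
    (fun b => Function.update b i0 (b i0 + 1)) ?_ ?_ ?_ ?_ ?_
  · intro b hb
    simp only [Finset.mem_filter, Finset.Nat.mem_antidiagonalTuple] at hb
    obtain ⟨hsum, hne⟩ := hb
    rw [Finset.Nat.mem_antidiagonalTuple,
      Finset.sum_update_of_mem (Finset.mem_univ i0)]
    rw [← Finset.add_sum_erase _ b (Finset.mem_univ i0), Finset.erase_eq] at hsum
    omega
  · intro b hb
    rw [Finset.Nat.mem_antidiagonalTuple] at hb
    simp only [Finset.mem_filter, Finset.Nat.mem_antidiagonalTuple]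
    constructor
    · rw [Finset.sum_update_of_mem (Finset.mem_univ i0)]
      rw [← Finset.add_sum_erase _ b (Finset.mem_univ i0), Finset.erase_eq] at hb
      omega
    · simp
  · intro b hb
    simp only [Finset.mem_filter] at hb
    funext j
    rcases eq_or_ne j i0 with rfl | hj
    · simp only [Function.update_self]
      omega
    · simp [Function.update_of_ne hj]
  · intro b _
    funext j
    rcases eq_or_ne j i0 with rfl | hj
    · simp
    · simp [Function.update_of_ne hj]
  · intro b hb
    simp only [Finset.mem_filter] at hb
    congr 1
    simp only [Function.update_self]
    omega

/-- The sum of the distinguished coordinate over all tuples summing to `k`. -/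
lemma R2_sum_b0 (M : ℕ) (i0 : Fin (M + 1)) :
    ∀ k, ∑ b ∈ Finset.Nat.antidiagonalTuple (M + 1) k, b i0 = (M + k).choose (M + 1) := by
  intro k
  induction k with
  | zero =>
    rw [Finset.Nat.antidiagonalTuple_zero_right]
    simp [Nat.choose_eq_zero_of_lt (by omega : M + 0 < M + 1)]
  | succ n ih =>
    have h : ∑ b ∈ Finset.Nat.antidiagonalTuple (M + 1) (n + 1), b i0
        = ∑ b ∈ Finset.Nat.antidiagonalTuple (M + 1) n, (b i0 + 1) :=
      R2_sum_shift (M + 1) n i0 (fun x => x) rfl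
    rw [h, Finset.sum_add_distrib, ih, Finset.sum_const, smul_eq_mul, mul_one,
      R2_card_antidiagTuple]
    clear h ih
    have h1 : (M + 1 + n - 1) = M + n := by omega
    have h2 : (M + n).choose n = (M + n).choose M := by
      rw [← Nat.choose_symm (by omega : n ≤ M + n)]
      congr 1
      omega
    have h3 : M + (n + 1) = (M + n) + 1 := by omega
    rw [h1, h2, h3, Nat.choose_succ_succ]
    simp only [Nat.succ_eq_add_one]
    omega

/-- Evaluation of the inner sum over the four patterns. -/
lemma R2_inner_sum (φ : Bool × Bool → ℕ) (khat d : ℕ)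
    (hφ01 : φ (false, true) = khat) (hφ10 : φ (true, false) = khat)
    (hφd : φ (false, false) + φ (true, true) = d) (n : ℕ) :
    ∑ u : Bool × Bool, φ u * Φ₀ n u = d * (n - 1) + 2 * khat * n := by
  rw [Fintype.sum_prod_type]
  simp only [Fintype.sum_bool]
  rw [hφ01, hφ10]
  rcases n with _ | n
  · simp [Φ₀]
  · simp only [Φ₀, if_neg (Nat.succ_ne_zero n)]
    norm_num
    rw [← hφd]
    ring_nf

/-- Evaluation of the correction term `R₂` in `C_Y(2)`:
`∑_{B ∈ B₁} ∑_{u ∈ {0,1}²} φ(u)·Φ₀(b₁;u) = L₁·C(L₁+k₁-2, L₁) + 2khat·C(L₁+k₁-2, k₁-1)`. -/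
theorem R2_evaluation (L₁ k₁ khat : ℕ) (hL : 1 ≤ L₁) (hk : 1 ≤ k₁)
    (hkhat : 2 * khat ≤ L₁) (φ : Bool × Bool → ℕ)
    (hφ01 : φ (false, true) = khat) (hφ10 : φ (true, false) = khat)
    (hφd : φ (false, false) + φ (true, true) = L₁ - 2 * khat) :
    (∑ᶠ b ∈ {b : Fin L₁ → ℕ | ∑ j, b j = k₁},
        ∑ u : Bool × Bool, φ u * Φ₀ (b ⟨0, hL⟩) u) =
      L₁ * (L₁ + k₁ - 2).choose L₁ + 2 * khat * (L₁ + k₁ - 2).choose (k₁ - 1) := by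
  obtain ⟨d, hd⟩ : ∃ d, L₁ = 2 * khat + d := ⟨L₁ - 2 * khat, by omega⟩
  have hφd' : φ (false, false) + φ (true, true) = d := by omega
  clear hφd hkhat
  obtain ⟨M, rfl⟩ : ∃ M, L₁ = M + 1 := ⟨L₁ - 1, by omega⟩
  obtain ⟨m, rfl⟩ : ∃ m, k₁ = m + 1 := ⟨k₁ - 1, by omega⟩
  clear hk
  have hset : {b : Fin (M + 1) → ℕ | ∑ j, b j = m + 1} =
      ↑(Finset.Nat.antidiagonalTuple (M + 1) (m + 1)) := by
    ext b
    simp [Finset.Nat.mem_antidiagonalTuple]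
  rw [hset, finsum_mem_coe_finset]
  clear hset
  set i0 : Fin (M + 1) := ⟨0, hL⟩ with hi0
  rw [Finset.sum_congr rfl
    (fun b _ => R2_inner_sum φ khat d hφ01 hφ10 hφd' (b i0))]
  rw [Finset.sum_add_distrib, ← Finset.mul_sum, ← Finset.mul_sum]
  have hA : ∑ b ∈ Finset.Nat.antidiagonalTuple (M + 1) (m + 1), (b i0 - 1)
      = (M + m).choose (M + 1) := by
    have h : ∑ b ∈ Finset.Nat.antidiagonalTuple (M + 1) (m + 1), (b i0 - 1)
        = ∑ b ∈ Finset.Nat.antidiagonalTuple (M + 1) m, (b i0 + 1 - 1) :=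
      R2_sum_shift (M + 1) m i0 (fun x => x - 1) rfl
    rw [h]
    simp only [Nat.add_sub_cancel]
    exact R2_sum_b0 M i0 m
  have hB : ∑ b ∈ Finset.Nat.antidiagonalTuple (M + 1) (m + 1), b i0
      = (M + m).choose M + (M + m).choose (M + 1) := by
    rw [R2_sum_b0 M i0 (m + 1)]
    have h3 : M + (m + 1) = (M + m) + 1 := by ring
    rw [h3, Nat.choose_succ_succ]
  rw [hA, hB]
  clear hA hB
  have hsymm : (M + 1 + (m + 1) - 2).choose (m + 1 - 1) = (M + m).choose M := by
    have h1 : M + 1 + (m + 1) - 2 = M + m := by omega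
    have h2 : m + 1 - 1 = m := by omega
    rw [h1, h2, ← Nat.choose_symm (by omega : m ≤ M + m)]
    congr 1
    omega
  have h1 : M + 1 + (m + 1) - 2 = M + m := by omega
  rw [hsymm, h1, hd]
  ring
end
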